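/- Let A be a pfgc k-algebra and let S be a commutative associative unital k-algebra. Then the map ψ : C(A)⊗S → C(A⊗S), determined by ψ(γ⊗s) = γ⊗L_s, is an isomorphism of associative algebras. -/

import Mathlib

/-!
Fix a basis `(b i)` of `S`, so that every element of `M ⊗ S` is uniquely `∑ mᵢ ⊗ b i`
(for `M = A` and `M = C(A)`). The coordinates of `ψ t (x ⊗ 1)` are those of `t` evaluated at `x`,
whence injectivity. Conversely, an element `T` of the centroid of `A ⊗ S` has coordinate maps
`Tᵢ x = (i-th coordinate of T (x ⊗ 1))`, which lie in `C(A)`. Since `A ⊗ S` is perfect, its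
centroid is commutative, so writing `x = ∑ γⱼ aⱼ` over finitely many generators gives
`T (x ⊗ 1) = ∑ (γⱼ ⊗ id) (T (aⱼ ⊗ 1))`: only finitely many `Tᵢ` are nonzero, and
`u = ∑ Tᵢ ⊗ b i` lies in `C(A) ⊗ S`. Finally `ψ u` and `T` agree on `A ⊗ 1`, and a centroid
element of `A ⊗ S` is determined there because `A ⊗ S` is spanned by the products `(x ⊗ 1) v`.
-/

open TensorProduct

set_option synthInstance.maxHeartbeats 1000000
set_option maxHeartbeats 2000000

noncomputable section

/-- The set of derivations of a (possibly non-associative, non-unital) `k`-algebra `B`,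
as a submodule of `Module.End k B`. -/
def Derivations (k B : Type) [Field k] [NonUnitalNonAssocSemiring B] [Module k B]
    [SMulCommClass k B B] [IsScalarTower k B B] :
    Submodule k (Module.End k B) where
  carrier := {d | ∀ x y : B, d (x * y) = d x * y + x * d y}
  add_mem' := by
    intro f g hf hg x y
    simp only [LinearMap.add_apply, hf x y, hg x y, add_mul, mul_add]
    abel
  zero_mem' := by intro x y; simp
  smul_mem' := by
    intro c f hf x y
    simp only [LinearMap.smul_apply, hf x y, smul_add, smul_mul_assoc, mul_smul_comm]

/-- The centroid of a (possibly non-associative, non-unital) `k`-algebra `B`, as a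
subalgebra of `Module.End k B`. -/
def centroid (k B : Type) [Field k] [NonUnitalNonAssocSemiring B] [Module k B]
    [SMulCommClass k B B] [IsScalarTower k B B] :
    Subalgebra k (Module.End k B) where
  carrier := {γ | ∀ x y : B, γ (x * y) = γ x * y ∧ γ (x * y) = x * γ y}
  mul_mem' := by
    intro γ δ hγ hδ x y
    constructor
    · show γ (δ (x * y)) = γ (δ x) * y
      rw [(hδ x y).1, (hγ (δ x) y).1]
    · show γ (δ (x * y)) = x * γ (δ y)
      rw [(hδ x y).2, (hγ x (δ y)).2]
  one_mem' := by intro x y; exact ⟨rfl, rfl⟩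
  add_mem' := by
    intro γ δ hγ hδ x y
    constructor
    · simp [LinearMap.add_apply, (hγ x y).1, (hδ x y).1, add_mul]
    · simp [LinearMap.add_apply, (hγ x y).2, (hδ x y).2, mul_add]
  zero_mem' := by intro x y; simp
  algebraMap_mem' := by
    intro c x y
    constructor
    · simp [Module.algebraMap_end_apply, smul_mul_assoc]
    · simp [Module.algebraMap_end_apply, mul_smul_comm]

/-- A `k`-algebra is perfect if it is spanned by products. -/
def IsPerfectAlg (k B : Type) [Field k] [NonUnitalNonAssocSemiring B] [Module k B] : Prop :=
  Submodule.span k {z : B | ∃ x y : B, x * y = z} = ⊤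

/-- The natural map `ψ : C(A) ⊗ S → End(A ⊗ S)`, `γ ⊗ s ↦ γ ⊗ L_s`. -/
def psi (k A S : Type) [Field k] [NonUnitalNonAssocRing A] [Module k A]
    [SMulCommClass k A A] [IsScalarTower k A A] [CommRing S] [Algebra k S] :
    (↥(centroid k A) ⊗[k] S) →ₗ[k] Module.End k (A ⊗[k] S) :=
  (TensorProduct.homTensorHomMap (RingHom.id k) A S A S).comp
    (TensorProduct.map (centroid k A).val.toLinearMap (LinearMap.mul k S))
/-- `B` is finitely generated as a module over a set `Γ` of `k`-linear endomorphisms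
(e.g. over its centroid or differential centroid). -/
def FGOverSet (k B : Type) [Field k] [AddCommMonoid B] [Module k B]
    (Γ : Set (Module.End k B)) : Prop :=
  ∃ (n : ℕ) (a : Fin n → B), ∀ x : B, ∃ γ : Fin n → Module.End k B,
    (∀ i, γ i ∈ Γ) ∧ x = ∑ i, γ i (a i)

section Centroid

variable {k B : Type} [Field k] [NonUnitalNonAssocSemiring B] [Module k B]
  [SMulCommClass k B B] [IsScalarTower k B B]

theorem centroid_ext_of_span_image2_mul_eq_top {X : Set B}
    (hX : Submodule.span k (Set.image2 (· * ·) X Set.univ) = ⊤)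
    {γ δ : Module.End k B} (hγ : γ ∈ centroid k B) (hδ : δ ∈ centroid k B)
    (h : ∀ x ∈ X, γ x = δ x) : γ = δ := by
  refine LinearMap.ext_on hX ?_
  rintro _ ⟨x, hx, y, -, rfl⟩
  simp only [(hγ x y).1, (hδ x y).1, h x hx]

theorem IsPerfectAlg.commute_of_mem_centroid (hB : IsPerfectAlg k B) {γ δ : Module.End k B}
    (hγ : γ ∈ centroid k B) (hδ : δ ∈ centroid k B) : Commute γ δ := by
  refine LinearMap.ext_on hB ?_
  rintro _ ⟨x, y, rfl⟩
  simp only [Module.End.mul_apply, (hδ x y).1, (hγ (δ x) y).2, (hγ x y).2, (hδ x (γ y)).1]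

end Centroid

section TensorProduct

variable {k A B : Type} [Field k]
  [NonUnitalNonAssocSemiring A] [Module k A] [SMulCommClass k A A] [IsScalarTower k A A]
  [NonUnitalNonAssocSemiring B] [Module k B] [SMulCommClass k B B] [IsScalarTower k B B]

theorem TensorProduct.map_mem_centroid {γ : Module.End k A} {δ : Module.End k B}
    (hγ : γ ∈ centroid k A) (hδ : δ ∈ centroid k B) :
    TensorProduct.map γ δ ∈ centroid k (A ⊗[k] B) := by
  intro u v
  constructor
  · induction u using TensorProduct.induction_on with
    | zero => simp
    | add u u' hu hu' => simp only [add_mul, map_add, hu, hu']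
    | tmul a b =>
      induction v using TensorProduct.induction_on with
      | zero => simp
      | add v v' hv hv' => simp only [mul_add, map_add, hv, hv']
      | tmul a' b' =>
        simp only [Algebra.TensorProduct.tmul_mul_tmul, map_tmul, (hγ a a').1, (hδ b b').1]
  · induction u using TensorProduct.induction_on with
    | zero => simp
    | add u u' hu hu' => simp only [add_mul, map_add, hu, hu']
    | tmul a b =>
      induction v using TensorProduct.induction_on with
      | zero => simp
      | add v v' hv hv' => simp only [mul_add, map_add, hv, hv']
      | tmul a' b' =>
        simp only [Algebra.TensorProduct.tmul_mul_tmul, map_tmul, (hγ a a').2, (hδ b b').2]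

theorem LinearMap.mul_mem_centroid {S : Type} [CommSemiring S] [Algebra k S] (s : S) :
    LinearMap.mul k S s ∈ centroid k S := fun x y => by
  simp only [LinearMap.mul_apply']
  constructor <;> ring

end TensorProduct

section TensorOne

variable {k A S : Type} [Field k]
  [NonUnitalNonAssocSemiring A] [Module k A] [SMulCommClass k A A] [IsScalarTower k A A]
  [Semiring S] [Algebra k S]

theorem IsPerfectAlg.span_tmul_one_mul_eq_top (hA : IsPerfectAlg k A) :
    Submodule.span k
      (Set.image2 (· * ·) (Set.range fun x : A => x ⊗ₜ[k] (1 : S)) Set.univ) = ⊤ := by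
  rw [eq_top_iff, ← TensorProduct.span_tmul_eq_top k A S, Submodule.span_le]
  rintro _ ⟨x, s, rfl⟩
  have hx : x ∈ Submodule.span k {z : A | ∃ u v : A, u * v = z} := hA ▸ Submodule.mem_top
  refine Submodule.span_mono ?_
    (Submodule.apply_mem_span_image_of_mem_span ((TensorProduct.mk k A S).flip s) hx)
  rintro _ ⟨_, ⟨u, v, rfl⟩, rfl⟩
  exact ⟨u ⊗ₜ 1, ⟨u, rfl⟩, v ⊗ₜ s, trivial, by simp⟩

theorem IsPerfectAlg.tensorProduct (hA : IsPerfectAlg k A) : IsPerfectAlg k (A ⊗[k] S) := by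
  rw [IsPerfectAlg, eq_top_iff, ← hA.span_tmul_one_mul_eq_top]
  refine Submodule.span_mono ?_
  rintro _ ⟨x, -, y, -, rfl⟩
  exact ⟨x, y, rfl⟩

end TensorOne

section Coordinates

open Module

variable {k S ι : Type} [Field k] [Semiring S] [Algebra k S] [DecidableEq ι] (b : Basis ι k S)

section Module

variable {M : Type} [AddCommMonoid M] [Module k M]

theorem equivFinsuppOfBasisRight_rTensor (γ : Module.End k M) (u : M ⊗[k] S) (i : ι) :
    equivFinsuppOfBasisRight b (γ.rTensor S u) i = γ (equivFinsuppOfBasisRight b u i) := by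
  induction u using TensorProduct.induction_on with
  | zero => simp
  | tmul a s => simp
  | add u v hu hv => simp [hu, hv]

def tensorOneCoord (T : Module.End k (M ⊗[k] S)) (i : ι) : Module.End k M :=
  Finsupp.lapply i ∘ₗ (equivFinsuppOfBasisRight b).toLinearMap ∘ₗ T ∘ₗ
    (TensorProduct.mk k M S).flip 1

theorem tensorOneCoord_apply (T : Module.End k (M ⊗[k] S)) (i : ι) (x : M) :
    tensorOneCoord b T i x = equivFinsuppOfBasisRight b (T (x ⊗ₜ 1)) i :=
  rfl

end Module

variable {A : Type} [NonUnitalNonAssocSemiring A] [Module k A] [SMulCommClass k A A]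
  [IsScalarTower k A A]

theorem equivFinsuppOfBasisRight_mul_tmul_one (u : A ⊗[k] S) (y : A) (i : ι) :
    equivFinsuppOfBasisRight b (u * (y ⊗ₜ 1)) i = equivFinsuppOfBasisRight b u i * y := by
  induction u using TensorProduct.induction_on with
  | zero => simp
  | tmul a s => simp [smul_mul_assoc]
  | add u v hu hv => simp [add_mul, hu, hv]

theorem equivFinsuppOfBasisRight_tmul_one_mul (x : A) (u : A ⊗[k] S) (i : ι) :
    equivFinsuppOfBasisRight b ((x ⊗ₜ 1) * u) i = x * equivFinsuppOfBasisRight b u i := by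
  induction u using TensorProduct.induction_on with
  | zero => simp
  | tmul a s => simp [mul_smul_comm]
  | add u v hu hv => simp [mul_add, hu, hv]

variable {b}

theorem tensorOneCoord_mem_centroid {T : Module.End k (A ⊗[k] S)}
    (hT : T ∈ centroid k (A ⊗[k] S)) (i : ι) : tensorOneCoord b T i ∈ centroid k A := by
  intro x y
  have hxy : (x * y) ⊗ₜ[k] (1 : S) = (x ⊗ₜ 1) * (y ⊗ₜ 1) := by simp
  simp only [tensorOneCoord_apply, hxy]
  constructor
  · rw [(hT _ _).1, equivFinsuppOfBasisRight_mul_tmul_one]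
  · rw [(hT _ _).2, equivFinsuppOfBasisRight_tmul_one_mul]

omit [DecidableEq ι] in
theorem rTensor_mem_centroid {γ : Module.End k A} (hγ : γ ∈ centroid k A) :
    γ.rTensor S ∈ centroid k (A ⊗[k] S) :=
  TensorProduct.map_mem_centroid hγ (centroid k S).one_mem

theorem tensorOneCoord_support_finite (hA : IsPerfectAlg k A)
    (hfg : FGOverSet k A (centroid k A : Set (Module.End k A)))
    {T : Module.End k (A ⊗[k] S)} (hT : T ∈ centroid k (A ⊗[k] S)) :
    (Function.support (tensorOneCoord b T)).Finite := by
  obtain ⟨n, a, ha⟩ := hfg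
  refine (Set.finite_iUnion fun j : Fin n =>
    (equivFinsuppOfBasisRight b (T (a j ⊗ₜ 1))).support.finite_toSet).subset ?_
  intro i hi
  obtain ⟨x, hx⟩ : ∃ x, tensorOneCoord b T i x ≠ 0 := by
    by_contra! h
    exact hi (LinearMap.ext h)
  obtain ⟨γ, hγ, rfl⟩ := ha x
  have hcomm (j : Fin n) :
      T ((γ j).rTensor S (a j ⊗ₜ 1)) = (γ j).rTensor S (T (a j ⊗ₜ 1)) :=
    LinearMap.congr_fun
      ((hA.tensorProduct.commute_of_mem_centroid hT (rTensor_mem_centroid (hγ j))).eq) _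
  rw [tensorOneCoord_apply, sum_tmul] at hx
  simp only [← LinearMap.rTensor_tmul, map_sum, hcomm, Finsupp.finsetSum_apply,
    equivFinsuppOfBasisRight_rTensor] at hx
  obtain ⟨j, -, hj⟩ := Finset.exists_ne_zero_of_sum_ne_zero hx
  exact Set.mem_iUnion.mpr ⟨j, Finsupp.mem_support_iff.mpr fun h => hj (by rw [h, map_zero])⟩

end Coordinates

section Psi

open Module

variable {k A S : Type} [Field k] [NonUnitalNonAssocRing A] [Module k A]
  [SMulCommClass k A A] [IsScalarTower k A A] [CommRing S] [Algebra k S]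

theorem psi_tmul (γ : centroid k A) (s : S) :
    psi k A S (γ ⊗ₜ s) = TensorProduct.map γ.val (LinearMap.mul k S s) := by
  simp [psi]

theorem psi_mem_centroid (t : centroid k A ⊗[k] S) : psi k A S t ∈ centroid k (A ⊗[k] S) := by
  induction t using TensorProduct.induction_on with
  | zero => rw [map_zero]; exact zero_mem _
  | tmul γ s =>
    exact psi_tmul γ s ▸ TensorProduct.map_mem_centroid γ.2 (LinearMap.mul_mem_centroid s)
  | add u v hu hv => rw [map_add]; exact add_mem hu hv

theorem psi_mul (x y : centroid k A ⊗[k] S) : psi k A S (x * y) = psi k A S x * psi k A S y := by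
  induction x using TensorProduct.induction_on with
  | zero => simp
  | add u v hu hv => simp only [add_mul, map_add, hu, hv]
  | tmul γ s =>
    induction y using TensorProduct.induction_on with
    | zero => simp
    | add u v hu hv => simp only [mul_add, map_add, hu, hv]
    | tmul γ' s' =>
      rw [Algebra.TensorProduct.tmul_mul_tmul, psi_tmul, psi_tmul, psi_tmul,
        Module.End.mul_eq_comp, ← TensorProduct.map_comp]
      congr 1
      ext
      simp [mul_assoc]

theorem psi_one : psi k A S 1 = 1 := by
  ext x s
  simp [Algebra.TensorProduct.one_def, psi_tmul]

theorem equivFinsuppOfBasisRight_psi_apply_tmul_one {ι : Type} [DecidableEq ι] (b : Basis ι k S)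
    (t : centroid k A ⊗[k] S) (x : A) (i : ι) :
    equivFinsuppOfBasisRight b (psi k A S t (x ⊗ₜ 1)) i =
      (equivFinsuppOfBasisRight b t i : Module.End k A) x := by
  induction t using TensorProduct.induction_on with
  | zero => simp
  | tmul γ s => simp [psi_tmul]
  | add u v hu hv => simp [hu, hv]

theorem psi_injective : Function.Injective (psi k A S) := by
  classical
  let b := Basis.ofVectorSpace k S
  refine (injective_iff_map_eq_zero _).mpr fun t ht => ?_
  refine (equivFinsuppOfBasisRight b).injective ?_
  ext i x
  simpa [ht] using (equivFinsuppOfBasisRight_psi_apply_tmul_one b t x i).symm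

theorem mem_range_psi_of_mem_centroid (hA : IsPerfectAlg k A)
    (hfg : FGOverSet k A (centroid k A : Set (Module.End k A)))
    {T : Module.End k (A ⊗[k] S)} (hT : T ∈ centroid k (A ⊗[k] S)) :
    T ∈ LinearMap.range (psi k A S) := by
  classical
  let b := Basis.ofVectorSpace k S
  let coords : _ →₀ centroid k A :=
    Finsupp.ofSupportFinite (fun i => ⟨tensorOneCoord b T i, tensorOneCoord_mem_centroid hT i⟩)
      ((tensorOneCoord_support_finite hA hfg hT).subset fun i hi h => hi (Subtype.ext h))
  refine ⟨(equivFinsuppOfBasisRight b).symm coords, ?_⟩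
  refine centroid_ext_of_span_image2_mul_eq_top hA.span_tmul_one_mul_eq_top
    (psi_mem_centroid _) hT ?_
  rintro _ ⟨x, rfl⟩
  refine (equivFinsuppOfBasisRight b).injective (Finsupp.ext fun i => ?_)
  rw [equivFinsuppOfBasisRight_psi_apply_tmul_one, LinearEquiv.apply_symm_apply]
  rfl

end Psi

theorem psi_isomorphism_of_pfgc_general
    (k A S : Type) [Field k] [NonUnitalNonAssocRing A] [Module k A]
    [SMulCommClass k A A] [IsScalarTower k A A] [CommRing S] [Algebra k S]
    (hA : IsPerfectAlg k A)
    (hfgc : FGOverSet k A (centroid k A : Set (Module.End k A))) :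
    Function.Injective (psi k A S) ∧
      (∀ x y : ↥(centroid k A) ⊗[k] S, psi k A S (x * y) = psi k A S x * psi k A S y) ∧
      psi k A S 1 = 1 ∧
      (∀ T : Module.End k (A ⊗[k] S),
        T ∈ LinearMap.range (psi k A S) ↔ T ∈ centroid k (A ⊗[k] S)) :=
  ⟨psi_injective, psi_mul, psi_one, fun _ =>
    ⟨fun ⟨t, ht⟩ => ht ▸ psi_mem_centroid t, mem_range_psi_of_mem_centroid hA hfgc⟩⟩

/-- Lemma 1.1(iii): if `A` is a pfgc algebra (nonzero, perfect and finitely generated as a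
module over its centroid) and `S` is a commutative associative unital algebra, then
`ψ : C(A) ⊗ S → C(A ⊗ S)` is an isomorphism of associative algebras. -/
theorem psi_isomorphism_of_pfgc
    (k A S : Type) [Field k] [NonUnitalNonAssocRing A] [Module k A]
    [SMulCommClass k A A] [IsScalarTower k A A] [CommRing S] [Algebra k S]
    (hA0 : Nontrivial A) (hA : IsPerfectAlg k A)
    (hfgc : FGOverSet k A (centroid k A : Set (Module.End k A))) :
    Function.Injective (psi k A S) ∧
      (∀ x y : ↥(centroid k A) ⊗[k] S, psi k A S (x * y) = psi k A S x * psi k A S y) ∧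
      psi k A S 1 = 1 ∧
      (∀ T : Module.End k (A ⊗[k] S),
        T ∈ LinearMap.range (psi k A S) ↔ T ∈ centroid k (A ⊗[k] S)) :=
  psi_isomorphism_of_pfgc_general k A S hA hfgc

end
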